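/- Let C be a multiplicatively disjoint arithmetic circuit over a field K computing a polynomial f, all of whose parse trees are isomorphic, as ordered rooted trees, to one common tree 𝒯 (with |𝒯| vertices). Then there exists a {*}-formula F of maximal dimension 3 and of size at most 9·|C|³·|𝒯| that computes f. -/

import Mathlib

namespace TC

/-- An entry of an input tensor: an element of `K` or a variable. -/
inductive Entry (K : Type) where
  | const : K → Entry K
  | var : ℕ → Entry K

noncomputable def Entry.toPoly {K : Type} [CommSemiring K] : Entry K → MvPolynomial ℕ K
  | .const c => MvPolynomial.C c
  | .var n => MvPolynomial.X n

/-- The index set of a tensor of order `ns`. -/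
def Idx : List ℕ → Type
  | [] => PUnit
  | n :: ns => Fin n × Idx ns

def Idx.cast {xs ys : List ℕ} (h : xs = ys) (e : Idx xs) : Idx ys := h ▸ e

def Idx.app : (xs : List ℕ) → {ys : List ℕ} → Idx xs → Idx ys → Idx (xs ++ ys)
  | [], _, _, f => f
  | _ :: xs, _, e, f => (e.1, Idx.app xs e.2 f)

def Idx.split : (xs : List ℕ) → {ys : List ℕ} → Idx (xs ++ ys) → Idx xs × Idx ys
  | [], _, e => (PUnit.unit, e)
  | _ :: xs, _, e => ((e.1, (Idx.split xs e.2).1), (Idx.split xs e.2).2)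

/-- A tensor over `R`: an order `(n_1, …, n_k)` together with an entry map. -/
structure Tens (R : Type) where
  order : List ℕ
  entry : Idx order → R

/-- Number of entries of a tensor. -/
def Tens.tsize {R} (T : Tens R) : ℕ := T.order.prod

/-- Dimension of a tensor. -/
def Tens.dim {R} (T : Tens R) : ℕ := T.order.length

/-- Maximal order of a tensor. -/
def Tens.maxOrder {R} (T : Tens R) : ℕ := T.order.foldr max 0

/-- `T` and `G` can be contracted: last order of `T` equals first order of `G`. -/
def Tens.Compatible {R} (T G : Tens R) : Prop :=
  T.order ≠ [] ∧ G.order ≠ [] ∧ T.order.getLast? = G.order.head?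

/-- Contraction `T * G` on the last dimension of `T` and the first dimension of `G`
(returning a junk scalar tensor when the orders are incompatible). -/
def Tens.contr {R : Type} [CommSemiring R] (T G : Tens R) : Tens R :=
  match hT : T.order.getLast?, hG : G.order with
  | some c, c' :: ms =>
      if hc : c' = c then
        { order := T.order.dropLast ++ ms
          entry := fun e =>
            let p := Idx.split T.order.dropLast e
            ∑ i : Fin c,
              T.entry (Idx.cast
                (show T.order.dropLast ++ [c] = T.order by
                  have hne : T.order ≠ [] := by
                    intro h; rw [h] at hT; simp at hT
                  have : T.order.getLast hne = c := by
                    have := List.getLast?_eq_some_getLast (l := T.order) hne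
                    rw [this] at hT
                    exact (Option.some.injEq _ _).mp hT
                  rw [← this]
                  exact List.dropLast_append_getLast hne)
                (Idx.app T.order.dropLast p.1 ((i, PUnit.unit) : Idx [c]))) *
              G.entry (Idx.cast
                (show c :: ms = G.order by rw [hG, hc])
                ((i, p.2) : Idx (c :: ms))) }
      else ⟨[], fun _ => 0⟩
  | _, _ => ⟨[], fun _ => 0⟩

end TC

namespace TC

/-- Insert a coordinate value at position `i`, recovering an index for order `l`
from an index for `l.eraseIdx i`. -/
def Idx.insertAt : (l : List ℕ) → (i : Fin l.length) → Fin (l.get i) →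
    Idx (l.eraseIdx i.val) → Idx l
  | _ :: _, ⟨0, _⟩, r, e => (r, e)
  | _ :: l, ⟨i + 1, h⟩, r, e =>
      (e.1, Idx.insertAt l ⟨i, by simpa using Nat.lt_of_succ_lt_succ h⟩ r e.2)

/-- The contraction `T *_{i,j} G` on dimension `i` of `T` and dimension `j` of `G`
(0-based; returns a junk scalar tensor when incompatible). -/
noncomputable def Tens.contrIJ {R : Type} [CommSemiring R] (T G : Tens R) (i j : ℕ) : Tens R :=
  if h : ∃ (hi : i < T.order.length) (hj : j < G.order.length),
      T.order.get ⟨i, hi⟩ = G.order.get ⟨j, hj⟩ then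
    { order := T.order.eraseIdx i ++ G.order.eraseIdx j
      entry := fun e =>
        let hi := h.choose
        let hj := h.choose_spec.choose
        let hc := h.choose_spec.choose_spec
        let p := Idx.split (T.order.eraseIdx i) e
        ∑ r : Fin (T.order.get ⟨i, hi⟩),
          T.entry (Idx.insertAt T.order ⟨i, hi⟩ r p.1) *
          G.entry (Idx.insertAt G.order ⟨j, hj⟩ (Fin.cast hc r) p.2) }
  else ⟨[], fun _ => 0⟩

/-- `{*}`-formulas: leaves are input tensors with entries in `K` or variables,
internal nodes are contractions `*`. -/
inductive SForm (K : Type) where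
  | input : Tens (Entry K) → SForm K
  | contr : SForm K → SForm K → SForm K

variable {K : Type} [Field K]

/-- The tensor computed by a `{*}`-formula. -/
noncomputable def SForm.eval : SForm K → Tens (MvPolynomial ℕ K)
  | .input T => ⟨T.order, fun e => (T.entry e).toPoly⟩
  | .contr F G => (F.eval).contr G.eval

/-- Well-formedness: at every `*`-node the orders match. -/
def SForm.WF : SForm K → Prop
  | .input _ => True
  | .contr F G => F.WF ∧ G.WF ∧ F.eval.Compatible G.eval

/-- Size of a `{*}`-formula: number of `*`-nodes plus sizes of the input tensors. -/
def SForm.size : SForm K → ℕ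
  | .input T => T.tsize
  | .contr F G => F.size + G.size + 1

/-- Dimension of the tensor computed by the formula. -/
noncomputable def SForm.dim (F : SForm K) : ℕ := F.eval.dim

/-- Maximal dimension over all nodes of the formula. -/
noncomputable def SForm.maxdim : SForm K → ℕ
  | .input T => T.dim
  | .contr F G => max ((F.eval.contr G.eval).dim) (max F.maxdim G.maxdim)

/-- Input dimension: maximal dimension of an input tensor. -/
def SForm.inputDim : SForm K → ℕ
  | .input T => T.dim
  | .contr F G => max F.inputDim G.inputDim

/-- Maximum of the maximal orders of the input tensors. -/
def SForm.inputMaxOrder : SForm K → ℕ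
  | .input T => T.maxOrder
  | .contr F G => max F.inputMaxOrder G.inputMaxOrder

/-- All input tensors have dimension at least 2. -/
def SForm.InputsDimGE2 : SForm K → Prop
  | .input T => 2 ≤ T.dim
  | .contr F G => F.InputsDimGE2 ∧ G.InputsDimGE2

/-- A formula of dimension `k` and input dimension `p` is tame if
`maxdim ≤ max k p`. -/
noncomputable def SForm.Tame (F : SForm K) : Prop := F.maxdim ≤ max F.dim F.inputDim

/-- Every subformula is tame. -/
noncomputable def SForm.TotallyTame : SForm K → Prop
  | .input T => (SForm.input T : SForm K).Tame
  | .contr F G => (SForm.contr F G).Tame ∧ F.TotallyTame ∧ G.TotallyTame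

/-- The tensor computed by `F` has a single entry, equal to the polynomial `f`. -/
noncomputable def SForm.ComputesPoly (F : SForm K) (f : MvPolynomial ℕ K) : Prop :=
  F.eval.tsize = 1 ∧ ∀ e, F.eval.entry e = f

/-- `{*_{i,j}}`-formulas: internal nodes carry the pair of contracted dimensions
(0-based). -/
inductive IForm (K : Type) where
  | input : Tens (Entry K) → IForm K
  | contr : ℕ → ℕ → IForm K → IForm K → IForm K

noncomputable def IForm.eval : IForm K → Tens (MvPolynomial ℕ K)
  | .input T => ⟨T.order, fun e => (T.entry e).toPoly⟩
  | .contr i j F G => (F.eval).contrIJ G.eval i j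

def IForm.WF : IForm K → Prop
  | .input _ => True
  | .contr i j F G => F.WF ∧ G.WF ∧
      ∃ (hi : i < F.eval.order.length) (hj : j < G.eval.order.length),
        F.eval.order.get ⟨i, hi⟩ = G.eval.order.get ⟨j, hj⟩

def IForm.size : IForm K → ℕ
  | .input T => T.tsize
  | .contr _ _ F G => F.size + G.size + 1

noncomputable def IForm.dim (F : IForm K) : ℕ := F.eval.dim

noncomputable def IForm.maxdim : IForm K → ℕ
  | .input T => T.dim
  | .contr i j F G => max ((F.eval.contrIJ G.eval i j).dim) (max F.maxdim G.maxdim)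

def IForm.inputDim : IForm K → ℕ
  | .input T => T.dim
  | .contr _ _ F G => max F.inputDim G.inputDim

noncomputable def IForm.Tame (F : IForm K) : Prop := F.maxdim ≤ max F.dim F.inputDim

noncomputable def IForm.TotallyTame : IForm K → Prop
  | .input T => (IForm.input T : IForm K).Tame
  | .contr i j F G => (IForm.contr i j F G).Tame ∧ F.TotallyTame ∧ G.TotallyTame

noncomputable def IForm.ComputesPoly (F : IForm K) (f : MvPolynomial ℕ K) : Prop :=
  F.eval.tsize = 1 ∧ ∀ e, F.eval.entry e = f

end TC

namespace TC

/-- A gate of an arithmetic circuit: an input (constant or variable) or a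
computation gate with the indices of its two children. -/
inductive Gate (K : Type) where
  | const : K → Gate K
  | var : ℕ → Gate K
  | add : ℕ → ℕ → Gate K
  | mul : ℕ → ℕ → Gate K

def Gate.children {K} : Gate K → List ℕ
  | .add j k => [j, k]
  | .mul j k => [j, k]
  | _ => []

def Gate.IsInput {K} : Gate K → Prop
  | .const _ => True
  | .var _ => True
  | _ => False

/-- An arithmetic circuit: a DAG of gates (children point to smaller indices,
which is equivalent to acyclicity) with a distinguished output gate. -/
structure Circuit (K : Type) where
  size : ℕ
  gate : Fin size → Gate K
  output : Fin size
  wf : ∀ i : Fin size, ∀ j ∈ (gate i).children, j < i.val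

/-- The polynomial computed by a gate of the circuit. -/
noncomputable def Circuit.eval {K : Type} [Field K] (C : Circuit K) :
    Fin C.size → MvPolynomial ℕ K
  | i =>
    match h : C.gate i with
    | .const c => MvPolynomial.C c
    | .var n => MvPolynomial.X n
    | .add j k =>
        have hj : j < i.val := C.wf i j (by rw [h]; simp [Gate.children])
        have hk : k < i.val := C.wf i k (by rw [h]; simp [Gate.children])
        C.eval ⟨j, hj.trans i.isLt⟩ + C.eval ⟨k, hk.trans i.isLt⟩
    | .mul j k =>
        have hj : j < i.val := C.wf i j (by rw [h]; simp [Gate.children])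
        have hk : k < i.val := C.wf i k (by rw [h]; simp [Gate.children])
        C.eval ⟨j, hj.trans i.isLt⟩ * C.eval ⟨k, hk.trans i.isLt⟩
  termination_by i => i.val

/-- The circuit computes `f` if its output gate computes `f`. -/
noncomputable def Circuit.Computes {K : Type} [Field K] (C : Circuit K)
    (f : MvPolynomial ℕ K) : Prop :=
  C.eval C.output = f

/-- `a` is a child of `b`. -/
def Circuit.Child {K} (C : Circuit K) (a b : Fin C.size) : Prop :=
  a.val ∈ (C.gate b).children

/-- The set of gates of the subcircuit rooted at `i`. -/
def Circuit.Subgates {K} (C : Circuit K) (i : Fin C.size) : Set (Fin C.size) :=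
  {j | Relation.ReflTransGen C.Child j i}

/-- Multiplicatively disjoint: the subcircuits rooted at the two children of any
`×`-gate are disjoint. -/
def Circuit.MultDisjoint {K} (C : Circuit K) : Prop :=
  ∀ i : Fin C.size, ∀ j k : ℕ, C.gate i = .mul j k →
    ∀ (hj : j < C.size) (hk : k < C.size),
      Disjoint (C.Subgates ⟨j, hj⟩) (C.Subgates ⟨k, hk⟩)

/-- Skew: every `×`-gate has at least one child which is an input gate. -/
def Circuit.Skew {K} (C : Circuit K) : Prop :=
  ∀ i : Fin C.size, ∀ j k : ℕ, C.gate i = .mul j k →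
    ∀ (hj : j < C.size) (hk : k < C.size),
      (C.gate ⟨j, hj⟩).IsInput ∨ (C.gate ⟨k, hk⟩).IsInput

/-- The class VP: families of polynomials computed by polynomial-size
multiplicatively disjoint circuits. -/
noncomputable def VP {K : Type} [Field K] (f : ℕ → MvPolynomial ℕ K) : Prop :=
  ∃ (C : ℕ → Circuit K) (P : Polynomial ℕ),
    ∀ n, (C n).MultDisjoint ∧ (C n).Computes (f n) ∧ (C n).size ≤ P.eval n

/-- Parse trees, recording at each node the index of the corresponding gate. -/
inductive ParseT where
  | leaf : ℕ → ParseT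
  | plus : ℕ → ParseT → ParseT
  | times : ℕ → ParseT → ParseT → ParseT

/-- Ordered rooted trees (shapes of parse trees); two parse trees are isomorphic
as ordered rooted trees iff they have the same shape. -/
inductive Shape where
  | lf : Shape
  | un : Shape → Shape
  | bin : Shape → Shape → Shape

def ParseT.shape : ParseT → Shape
  | .leaf _ => .lf
  | .plus _ t => .un t.shape
  | .times _ l r => .bin l.shape r.shape

/-- Number of vertices of a tree. -/
def Shape.size : Shape → ℕ
  | .lf => 1
  | .un t => t.size + 1
  | .bin l r => l.size + r.size + 1

/-- `C.ParseFrom i t`: `t` is a parse tree of the subcircuit of `C` rooted at gate `i`. -/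
inductive Circuit.ParseFrom {K} (C : Circuit K) : Fin C.size → ParseT → Prop where
  | leaf (i : Fin C.size) (h : (C.gate i).IsInput) : C.ParseFrom i (.leaf i.val)
  | plusL (i : Fin C.size) (j k : ℕ) (h : C.gate i = .add j k) (hj : j < C.size)
      (t : ParseT) (ht : C.ParseFrom ⟨j, hj⟩ t) : C.ParseFrom i (.plus i.val t)
  | plusR (i : Fin C.size) (j k : ℕ) (h : C.gate i = .add j k) (hk : k < C.size)
      (t : ParseT) (ht : C.ParseFrom ⟨k, hk⟩ t) : C.ParseFrom i (.plus i.val t)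
  | times (i : Fin C.size) (j k : ℕ) (h : C.gate i = .mul j k)
      (hj : j < C.size) (hk : k < C.size) (tl tr : ParseT)
      (hl : C.ParseFrom ⟨j, hj⟩ tl) (hr : C.ParseFrom ⟨k, hk⟩ tr) :
      C.ParseFrom i (.times i.val tl tr)

/-- `t` is a parse tree of the circuit `C`. -/
def Circuit.IsParseTree {K} (C : Circuit K) (t : ParseT) : Prop :=
  C.ParseFrom C.output t

end TC


/-!
Index vectors by the gates of `C` and evaluate the shape `S` bottom up. A leaf yields the
vector of input labels; a unary node contracts the matrix of `+`-gates with the vector of its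
child; a binary node contracts the 0/1 tensor of `×`-gates first with the vector of its right
child and then with that of its left child. By induction on the shape, the entry at gate `i`
of the vector built for a shape `p` is the value of gate `i` whenever all parse trees rooted
at `i` have shape `p`. A final contraction with the indicator vector of the output gate
extracts `f`. No tensor has more than three dimensions, and each node of `S` costs at most
`|C|³ + 2`.
-/

lemma Fin.sum_ite_val_eq_mul {R : Type} [CommSemiring R] {s a : ℕ} (ha : a < s)
    (w : Fin s → R) : ∑ j : Fin s, (if (j : ℕ) = a then (1 : R) else 0) * w j = w ⟨a, ha⟩ := by
  rw [Finset.sum_eq_single ⟨a, ha⟩] <;> simp +contextual [Fin.ext_iff]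

namespace TC

section Contraction

variable {R : Type} [CommSemiring R]

@[simp] lemma Tens.contr_vec_vec (a : ℕ) (f g : Idx [a] → R) :
    Tens.contr ⟨[a], f⟩ ⟨[a], g⟩ =
      ⟨[], fun _ => ∑ i : Fin a, f (i, PUnit.unit) * g (i, PUnit.unit)⟩ := by
  unfold Tens.contr
  dsimp only [List.getLast?]
  split
  · rfl
  · simp_all

@[simp] lemma Tens.contr_mat_vec (a b : ℕ) (f : Idx [a, b] → R) (g : Idx [b] → R) :
    Tens.contr ⟨[a, b], f⟩ ⟨[b], g⟩ =
      ⟨[a], fun e => ∑ i : Fin b, f (e.1, i, PUnit.unit) * g (i, PUnit.unit)⟩ := by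
  unfold Tens.contr
  dsimp only [List.getLast?]
  split
  · rfl
  · simp_all

@[simp] lemma Tens.contr_cube_vec (a b c : ℕ) (f : Idx [a, b, c] → R) (g : Idx [c] → R) :
    Tens.contr ⟨[a, b, c], f⟩ ⟨[c], g⟩ =
      ⟨[a, b], fun e => ∑ i : Fin c, f (e.1, e.2.1, i, PUnit.unit) * g (i, PUnit.unit)⟩ := by
  unfold Tens.contr
  dsimp only [List.getLast?]
  split
  · rfl
  · simp_all

end Contraction

@[simp] lemma SForm.eval_input {K : Type} [Field K] (T : Tens (Entry K)) :
    (SForm.input T).eval = ⟨T.order, fun e => (T.entry e).toPoly⟩ := rfl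

@[simp] lemma SForm.eval_contr {K : Type} [Field K] (F G : SForm K) :
    (F.contr G).eval = F.eval.contr G.eval := rfl

namespace Circuit

section ParseTrees

variable {K : Type} (C : Circuit K)

lemma child_lt {i : Fin C.size} {a b : ℕ}
    (h : C.gate i = .add a b ∨ C.gate i = .mul a b) : a < C.size ∧ b < C.size := by
  have hc : a ∈ (C.gate i).children ∧ b ∈ (C.gate i).children := by
    rcases h with h | h <;> simp [h, Gate.children]
  exact ⟨(C.wf i a hc.1).trans i.isLt, (C.wf i b hc.2).trans i.isLt⟩

lemma exists_parseFrom (i : Fin C.size) : ∃ t, C.ParseFrom i t := by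
  induction i using WellFoundedLT.induction with
  | _ i ih =>
    match hg : C.gate i with
    | .const _ | .var _ => exact ⟨_, .leaf i (by simp [hg, Gate.IsInput])⟩
    | .add a b =>
      have ha : a < i.val := C.wf i a (by simp [hg, Gate.children])
      obtain ⟨t, ht⟩ := ih ⟨a, ha.trans i.isLt⟩ ha
      exact ⟨_, .plusL i a b hg _ t ht⟩
    | .mul a b =>
      have ha : a < i.val := C.wf i a (by simp [hg, Gate.children])
      have hb : b < i.val := C.wf i b (by simp [hg, Gate.children])
      obtain ⟨t, ht⟩ := ih ⟨a, ha.trans i.isLt⟩ ha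
      obtain ⟨u, hu⟩ := ih ⟨b, hb.trans i.isLt⟩ hb
      exact ⟨_, .times i a b hg _ _ t u ht hu⟩

def ShapeAt (i : Fin C.size) (p : Shape) : Prop :=
  ∀ t, C.ParseFrom i t → t.shape = p

variable {C} {i : Fin C.size}

lemma ShapeAt.isInput (h : C.ShapeAt i .lf) : (C.gate i).IsInput := by
  obtain ⟨t, ht⟩ := C.exists_parseFrom i
  have hs := h t ht
  cases ht <;> simp_all [ParseT.shape]

lemma ShapeAt.exists_add {q : Shape} (h : C.ShapeAt i (.un q)) :
    ∃ a b, C.gate i = .add a b := by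
  obtain ⟨t, ht⟩ := C.exists_parseFrom i
  have hs := h t ht
  cases ht <;> simp_all [ParseT.shape]

lemma ShapeAt.exists_mul {q r : Shape} (h : C.ShapeAt i (.bin q r)) :
    ∃ a b, C.gate i = .mul a b := by
  obtain ⟨t, ht⟩ := C.exists_parseFrom i
  have hs := h t ht
  cases ht <;> simp_all [ParseT.shape]

lemma ShapeAt.add_left {q : Shape} (h : C.ShapeAt i (.un q)) {a b : ℕ}
    (hg : C.gate i = .add a b) (ha : a < C.size) : C.ShapeAt ⟨a, ha⟩ q := fun t ht =>
  Shape.un.inj (h _ (.plusL i a b hg ha t ht))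

lemma ShapeAt.add_right {q : Shape} (h : C.ShapeAt i (.un q)) {a b : ℕ}
    (hg : C.gate i = .add a b) (hb : b < C.size) : C.ShapeAt ⟨b, hb⟩ q := fun t ht =>
  Shape.un.inj (h _ (.plusR i a b hg hb t ht))

lemma ShapeAt.mul_left {q r : Shape} (h : C.ShapeAt i (.bin q r)) {a b : ℕ}
    (hg : C.gate i = .mul a b) (ha : a < C.size) (hb : b < C.size) :
    C.ShapeAt ⟨a, ha⟩ q := fun t ht => by
  obtain ⟨u, hu⟩ := C.exists_parseFrom ⟨b, hb⟩
  exact (Shape.bin.inj (h _ (.times i a b hg ha hb t u ht hu))).1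

lemma ShapeAt.mul_right {q r : Shape} (h : C.ShapeAt i (.bin q r)) {a b : ℕ}
    (hg : C.gate i = .mul a b) (ha : a < C.size) (hb : b < C.size) :
    C.ShapeAt ⟨b, hb⟩ r := fun t ht => by
  obtain ⟨u, hu⟩ := C.exists_parseFrom ⟨a, ha⟩
  exact (Shape.bin.inj (h _ (.times i a b hg ha hb u t hu ht))).2

end ParseTrees

variable {K : Type} [Field K] (C : Circuit K)

section Evaluation

variable {C} {i : Fin C.size}

lemma eval_const {c : K} (h : C.gate i = .const c) : C.eval i = MvPolynomial.C c := by
  rw [Circuit.eval]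
  split <;> simp_all

lemma eval_var {n : ℕ} (h : C.gate i = .var n) : C.eval i = MvPolynomial.X n := by
  rw [Circuit.eval]
  split <;> simp_all

lemma eval_add {a b : ℕ} (h : C.gate i = .add a b) (ha : a < C.size) (hb : b < C.size) :
    C.eval i = C.eval ⟨a, ha⟩ + C.eval ⟨b, hb⟩ := by
  rw [Circuit.eval]
  split <;> simp_all

lemma eval_mul {a b : ℕ} (h : C.gate i = .mul a b) (ha : a < C.size) (hb : b < C.size) :
    C.eval i = C.eval ⟨a, ha⟩ * C.eval ⟨b, hb⟩ := by
  rw [Circuit.eval]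
  split <;> simp_all

end Evaluation

def inputVec : Tens (Entry K) :=
  ⟨[C.size], fun e => match C.gate e.1 with
    | .const c => .const c
    | .var n => .var n
    | _ => .const 0⟩

def addTensor : Tens (Entry K) :=
  ⟨[C.size, C.size], fun e => match C.gate e.1 with
    | .add a b => .const ((if e.2.1.val = a then 1 else 0) + (if e.2.1.val = b then 1 else 0))
    | _ => .const 0⟩

def mulTensor : Tens (Entry K) :=
  ⟨[C.size, C.size, C.size], fun e => match C.gate e.1 with
    | .mul a b => .const ((if e.2.1.val = a then 1 else 0) * (if e.2.2.1.val = b then 1 else 0))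
    | _ => .const 0⟩

def outputVec : Tens (Entry K) :=
  ⟨[C.size], fun e => .const (if e.1 = C.output then 1 else 0)⟩

noncomputable def shapeFormula : Shape → SForm K
  | .lf => .input C.inputVec
  | .un q => .contr (.input C.addTensor) (shapeFormula q)
  | .bin q r => .contr (.contr (.input C.mulTensor) (shapeFormula r)) (shapeFormula q)

/-- The vector computed by `shapeFormula p`: its entry at gate `i` sums the monomials of the
parse trees of shape `p` rooted at `i`. -/
noncomputable def shapeVec : Shape → Fin C.size → MvPolynomial ℕ K
  | .lf, i => (C.inputVec.entry (i, PUnit.unit)).toPoly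
  | .un q, i => ∑ j, (C.addTensor.entry (i, j, PUnit.unit)).toPoly * shapeVec q j
  | .bin q r, i => ∑ j,
      (∑ k, (C.mulTensor.entry (i, j, k, PUnit.unit)).toPoly * shapeVec r k) * shapeVec q j

lemma shapeFormula_eval (p : Shape) :
    (C.shapeFormula p).eval = ⟨[C.size], fun e => C.shapeVec p e.1⟩ := by
  induction p with
  | lf => rfl
  | un q ih => simp [shapeFormula, ih, addTensor, shapeVec]
  | bin q r ihq ihr => simp [shapeFormula, ihq, ihr, mulTensor, shapeVec]

lemma shapeFormula_wf (p : Shape) : (C.shapeFormula p).WF := by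
  induction p with
  | lf => trivial
  | un q ih => exact ⟨trivial, ih, by simp [shapeFormula_eval, addTensor, Tens.Compatible]⟩
  | bin q r ihq ihr =>
    refine ⟨⟨trivial, ihr, ?_⟩, ihq, ?_⟩ <;>
      simp [shapeFormula_eval, mulTensor, Tens.Compatible]

lemma shapeFormula_maxdim (p : Shape) : (C.shapeFormula p).maxdim ≤ 3 := by
  induction p with
  | lf => simp [shapeFormula, SForm.maxdim, inputVec, Tens.dim]
  | un q ih => simp [shapeFormula, SForm.maxdim, shapeFormula_eval, addTensor, Tens.dim, ih]
  | bin q r ihq ihr =>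
    simp [shapeFormula, SForm.maxdim, shapeFormula_eval, mulTensor, Tens.dim, ihq, ihr]

lemma shapeFormula_size (p : Shape) :
    (C.shapeFormula p).size ≤ (C.size ^ 3 + 2) * p.size := by
  have hcube : C.size ≤ C.size ^ 3 := Nat.le_self_pow (by norm_num) C.size
  induction p with
  | lf =>
    simp only [shapeFormula, SForm.size, inputVec, Tens.tsize, List.prod_singleton, Shape.size]
    lia
  | un q ih =>
    simp only [shapeFormula, SForm.size, addTensor, Tens.tsize, List.prod_cons,
      List.prod_nil, Shape.size]
    nlinarith
  | bin q r ihq ihr =>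
    simp only [shapeFormula, SForm.size, mulTensor, Tens.tsize, List.prod_cons,
      List.prod_nil, Shape.size]
    nlinarith

section ShapeVec

variable {C} {i : Fin C.size}

lemma shapeVec_lf (h : (C.gate i).IsInput) : C.shapeVec .lf i = C.eval i := by
  match hg : C.gate i, h with
  | .const c, _ => simp [shapeVec, inputVec, hg, Entry.toPoly, eval_const hg]
  | .var n, _ => simp [shapeVec, inputVec, hg, Entry.toPoly, eval_var hg]

lemma shapeVec_un {a b : ℕ} (hg : C.gate i = .add a b) (ha : a < C.size) (hb : b < C.size)
    (q : Shape) : C.shapeVec (.un q) i = C.shapeVec q ⟨a, ha⟩ + C.shapeVec q ⟨b, hb⟩ := by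
  simp only [shapeVec, addTensor, hg, Entry.toPoly, map_add, apply_ite MvPolynomial.C, map_one,
    map_zero, add_mul, Finset.sum_add_distrib, Fin.sum_ite_val_eq_mul ha,
    Fin.sum_ite_val_eq_mul hb]

lemma shapeVec_bin {a b : ℕ} (hg : C.gate i = .mul a b) (ha : a < C.size) (hb : b < C.size)
    (q r : Shape) : C.shapeVec (.bin q r) i = C.shapeVec q ⟨a, ha⟩ * C.shapeVec r ⟨b, hb⟩ := by
  simp only [shapeVec, mulTensor, hg, Entry.toPoly, map_mul, apply_ite MvPolynomial.C, map_one,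
    map_zero, mul_assoc, ← Finset.mul_sum, Fin.sum_ite_val_eq_mul ha, Fin.sum_ite_val_eq_mul hb]
  exact mul_comm _ _

theorem shapeVec_eq_eval {p : Shape} (h : C.ShapeAt i p) : C.shapeVec p i = C.eval i := by
  induction p generalizing i with
  | lf => exact shapeVec_lf h.isInput
  | un q ih =>
    obtain ⟨a, b, hg⟩ := h.exists_add
    obtain ⟨ha, hb⟩ := C.child_lt (.inl hg)
    rw [shapeVec_un hg ha hb, eval_add hg ha hb, ih (h.add_left hg ha), ih (h.add_right hg hb)]
  | bin q r ihq ihr =>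
    obtain ⟨a, b, hg⟩ := h.exists_mul
    obtain ⟨ha, hb⟩ := C.child_lt (.inr hg)
    rw [shapeVec_bin hg ha hb, eval_mul hg ha hb, ihq (h.mul_left hg ha hb),
      ihr (h.mul_right hg ha hb)]

end ShapeVec

noncomputable def toSForm (S : Shape) : SForm K :=
  .contr (C.shapeFormula S) (.input C.outputVec)

lemma toSForm_eval (S : Shape) :
    (C.toSForm S).eval = ⟨[], fun _ => C.shapeVec S C.output⟩ := by
  simp [toSForm, shapeFormula_eval, outputVec, Entry.toPoly, apply_ite MvPolynomial.C]

lemma toSForm_wf (S : Shape) : (C.toSForm S).WF :=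
  ⟨C.shapeFormula_wf S, trivial, by simp [shapeFormula_eval, outputVec, Tens.Compatible]⟩

lemma toSForm_maxdim (S : Shape) : (C.toSForm S).maxdim ≤ 3 := by
  simpa [toSForm, SForm.maxdim, shapeFormula_eval, outputVec, Tens.dim] using
    C.shapeFormula_maxdim S

lemma toSForm_size (S : Shape) : (C.toSForm S).size ≤ 9 * C.size ^ 3 * S.size := by
  have hC : 1 ≤ C.size := Fin.pos C.output
  have hS : 1 ≤ S.size := by cases S <;> simp [Shape.size]
  have h := C.shapeFormula_size S
  simp only [toSForm, SForm.size, outputVec, Tens.tsize, List.prod_singleton]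
  nlinarith [Nat.le_self_pow (n := 3) (by norm_num) C.size, Nat.one_le_pow 3 _ hC]

variable {C} in
lemma toSForm_computesPoly {S : Shape} (h : C.ShapeAt C.output S) :
    (C.toSForm S).ComputesPoly (C.eval C.output) := by
  rw [SForm.ComputesPoly, toSForm_eval]
  exact ⟨rfl, fun _ => shapeVec_eq_eval h⟩

end Circuit

end TC

open TC

theorem circuit_to_star_formula_general {K : Type} [Field K] (C : Circuit K)
    (f : MvPolynomial ℕ K) (S : Shape)
    (hf : C.Computes f)
    (hpt : ∀ t : ParseT, C.IsParseTree t → t.shape = S) :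
    ∃ F : SForm K, F.WF ∧ F.maxdim ≤ 3 ∧ F.size ≤ 9 * C.size ^ 3 * S.size ∧
      F.ComputesPoly f := by
  refine ⟨C.toSForm S, C.toSForm_wf S, C.toSForm_maxdim S, C.toSForm_size S, ?_⟩
  rw [← hf]
  exact Circuit.toSForm_computesPoly hpt

/-- a multiplicatively disjoint circuit all of whose parse trees have
a common shape `S` can be simulated by a `{*}`-formula of maximal dimension 3
and size at most `9 * |C|^3 * |S|`. -/
theorem circuit_to_star_formula {K : Type} [Field K] (C : Circuit K)
    (f : MvPolynomial ℕ K) (S : Shape)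
    (hmd : C.MultDisjoint) (hf : C.Computes f)
    (hpt : ∀ t : ParseT, C.IsParseTree t → t.shape = S) :
    ∃ F : SForm K, F.WF ∧ F.maxdim ≤ 3 ∧ F.size ≤ 9 * C.size ^ 3 * S.size ∧
      F.ComputesPoly f :=
  circuit_to_star_formula_general C f S hf hpt
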